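/- arXiv:1712.08445 — 3 statements merged into one kernel-verified Lean document; each statement's English description precedes it below -/
import Mathlib

section
/- Let μ > 0, q₀ ∈ ℕ, and λ(t) = λ₀ + Σ_{k=1}^{K} (a_k sin(kt) + b_k cos(kt)) ≥ 0. Define G(α,t) = (e^α − 1)·(λ₀(1 − e^{−μt})/μ + Σ_{k=1}^{K} ((a_kμ + b_k k)sin(kt) + (b_kμ − a_k k)(cos(kt) − e^{−μt}))/(μ² + k²)) + q₀·log(e^{−μt}(e^α − 1) + 1). Then G satisfies the first-order PDE μ(1 − e^{−α})∂G/∂α + ∂G/∂t = λ(t)(e^α − 1) with initial condition G(α, 0) = α q₀. -/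
/-!
Write `G(α,t) = (e^α - 1) m(t) + q₀ log(1 + e^{-μt}(e^α - 1))`. Each Fourier mode of `m` solves
`y' = f - μ y` for the corresponding mode `f` of `λ`, so `m' + μ m = λ` and the first term
produces `λ(t)(e^α - 1)`. The logarithm is constant along the characteristics
`e^{-μt}(e^α - 1) = const` of `μ(1 - e^{-α})∂_α + ∂_t`, so it contributes nothing.
-/

open Real

/-- The mean of an `M_t/M/∞` queue started empty with arrival rate
`λ₀ + ∑ (a k sin(kt) + b k cos(kt))`, i.e. the solution of `m' = λ - μ m`, `m 0 = 0`. -/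
noncomputable def fourierMean (mu lam₀ : ℝ) (a b : ℕ → ℝ) (K : ℕ) (t : ℝ) : ℝ :=
  lam₀ * (1 - exp (-mu * t)) / mu +
    ∑ k ∈ Finset.Icc 1 K,
      ((a k * mu + b k * k) * sin (k * t)
        + (b k * mu - a k * k) * (cos (k * t) - exp (-mu * t))) / (mu ^ 2 + k ^ 2)

lemma hasDerivAt_exp_const_mul (c t : ℝ) :
    HasDerivAt (fun s => exp (c * s)) (c * exp (c * t)) t := by
  simpa [mul_comm] using ((hasDerivAt_id' t).const_mul c).exp

lemma hasDerivAt_constMode {mu : ℝ} (hmu : mu ≠ 0) (c t : ℝ) :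
    HasDerivAt (fun s => c * (1 - exp (-mu * s)) / mu)
      (c - mu * (c * (1 - exp (-mu * t)) / mu)) t := by
  refine ((((hasDerivAt_exp_const_mul (-mu) t).const_sub 1).const_mul c).div_const mu).congr_deriv ?_
  field_simp
  ring

lemma hasDerivAt_fourierMode {mu ω : ℝ} (h : mu ^ 2 + ω ^ 2 ≠ 0) (a b t : ℝ) :
    HasDerivAt
      (fun s => ((a * mu + b * ω) * sin (ω * s)
        + (b * mu - a * ω) * (cos (ω * s) - exp (-mu * s))) / (mu ^ 2 + ω ^ 2))
      (a * sin (ω * t) + b * cos (ω * t)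
        - mu * (((a * mu + b * ω) * sin (ω * t)
          + (b * mu - a * ω) * (cos (ω * t) - exp (-mu * t))) / (mu ^ 2 + ω ^ 2))) t := by
  have hlin := (hasDerivAt_id' t).const_mul ω
  have hsin := hlin.sin.const_mul (a * mu + b * ω)
  have hcos := (hlin.cos.sub (hasDerivAt_exp_const_mul (-mu) t)).const_mul (b * mu - a * ω)
  refine ((hsin.add hcos).div_const (mu ^ 2 + ω ^ 2)).congr_deriv ?_
  field_simp
  ring

lemma hasDerivAt_fourierMean {mu : ℝ} (hmu : mu ≠ 0) (lam₀ : ℝ) (a b : ℕ → ℝ) (K : ℕ) (t : ℝ) :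
    HasDerivAt (fourierMean mu lam₀ a b K)
      (lam₀ + ∑ k ∈ Finset.Icc 1 K, (a k * sin (k * t) + b k * cos (k * t))
        - mu * fourierMean mu lam₀ a b K t) t := by
  have hmodes := HasDerivAt.fun_sum fun k (_ : k ∈ Finset.Icc 1 K) =>
    hasDerivAt_fourierMode (ω := (k : ℝ)) (by positivity) (a k) (b k) t
  refine ((hasDerivAt_constMode hmu lam₀ t).add hmodes).congr_deriv ?_
  rw [fourierMean, Finset.sum_sub_distrib, ← Finset.mul_sum]
  ring

lemma cgf_pde_of_hasDerivAt {mu ℓ α t : ℝ} {m : ℝ → ℝ} (hm : HasDerivAt m (ℓ - mu * m t) t)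
    (q : ℝ) (hpos : 0 < exp (-mu * t) * (exp α - 1) + 1) :
    mu * (1 - exp (-α)) *
        deriv (fun a' => (exp a' - 1) * m t + q * log (exp (-mu * t) * (exp a' - 1) + 1)) α
      + deriv (fun s => (exp α - 1) * m s + q * log (exp (-mu * s) * (exp α - 1) + 1)) t
      = ℓ * (exp α - 1) := by
  have hD := hpos.ne'
  have hα := (((hasDerivAt_exp α).sub_const 1).mul_const (m t)).fun_add
    (((((hasDerivAt_exp α).sub_const 1).const_mul (exp (-mu * t))).add_const 1).log hD
      |>.const_mul q)
  have ht := (hm.const_mul (exp α - 1)).fun_add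
    ((((hasDerivAt_exp_const_mul (-mu) t).mul_const (exp α - 1)).add_const 1).log hD
      |>.const_mul q)
  rw [hα.deriv, ht.deriv]
  have hexp : exp (-α) * exp α = 1 := by rw [← exp_add, neg_add_cancel, exp_zero]
  linear_combination
    (-mu * (m t + q * exp (-mu * t) / (exp (-mu * t) * (exp α - 1) + 1))) * hexp

theorem mt_m_inf_cgf_pde_general
    (mu : ℝ) (hmu : 0 < mu) (q₀ : ℕ) (K : ℕ) (lam₀ : ℝ) (a b : ℕ → ℝ)
    (lam : ℝ → ℝ)
    (hlam : ∀ t, lam t = lam₀ + ∑ k ∈ Finset.Icc 1 K, (a k * sin (k * t) + b k * cos (k * t)))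
    (G : ℝ → ℝ → ℝ)
    (hG : ∀ α t, G α t =
      (exp α - 1) *
        (lam₀ * (1 - exp (-mu * t)) / mu +
          ∑ k ∈ Finset.Icc 1 K,
            ((a k * mu + b k * k) * sin (k * t)
              + (b k * mu - a k * k) * (cos (k * t) - exp (-mu * t))) / (mu ^ 2 + k ^ 2))
      + (q₀ : ℝ) * Real.log (exp (-mu * t) * (exp α - 1) + 1)) :
    (∀ α t : ℝ, 0 < exp (-mu * t) * (exp α - 1) + 1 →
      mu * (1 - exp (-α)) * deriv (fun a' => G a' t) α + deriv (fun s => G α s) t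
        = lam t * (exp α - 1)) ∧
    (∀ α : ℝ, G α 0 = α * q₀) := by
  have hG' : G = fun α t =>
      (exp α - 1) * fourierMean mu lam₀ a b K t + q₀ * log (exp (-mu * t) * (exp α - 1) + 1) :=
    funext₂ hG
  refine ⟨fun α t hpos => ?_, fun α => ?_⟩
  · rw [hG', hlam]
    exact cgf_pde_of_hasDerivAt (hasDerivAt_fourierMean hmu.ne' lam₀ a b K t) q₀ hpos
  · simp [hG, mul_comm]

/-- The cumulant generating function of an `M_t/M/∞` queue with Fourier-series arrival
rate `λ(t)`, service rate `μ`, and deterministic initial value `q₀` satisfies the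
first-order PDE `μ(1 − e^{−α})∂G/∂α + ∂G/∂t = λ(t)(e^α − 1)`, `G(α,0) = αq₀`. -/
theorem mt_m_inf_cgf_pde
    (mu : ℝ) (hmu : 0 < mu) (q₀ : ℕ) (K : ℕ) (lam₀ : ℝ) (a b : ℕ → ℝ)
    (lam : ℝ → ℝ)
    (hlam : ∀ t, lam t = lam₀ + ∑ k ∈ Finset.Icc 1 K, (a k * sin (k * t) + b k * cos (k * t)))
    (hlam_nonneg : ∀ t, 0 ≤ lam t)
    (G : ℝ → ℝ → ℝ)
    (hG : ∀ α t, G α t =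
      (exp α - 1) *
        (lam₀ * (1 - exp (-mu * t)) / mu +
          ∑ k ∈ Finset.Icc 1 K,
            ((a k * mu + b k * k) * sin (k * t)
              + (b k * mu - a k * k) * (cos (k * t) - exp (-mu * t))) / (mu ^ 2 + k ^ 2))
      + (q₀ : ℝ) * Real.log (exp (-mu * t) * (exp α - 1) + 1)) :
    (∀ α t : ℝ, 0 < exp (-mu * t) * (exp α - 1) + 1 →
      mu * (1 - exp (-α)) * deriv (fun a' => G a' t) α + deriv (fun s => G α s) t
        = lam t * (exp α - 1)) ∧
    (∀ α : ℝ, G α 0 = α * q₀) :=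
  mt_m_inf_cgf_pde_general mu hmu q₀ K lam₀ a b lam hlam G hG
end

section
/- Let θ, μ, c > 0, q₀ > c, and let λ : [0,∞) → ℝ be continuous with inf_{t≥0} λ(t) > cμ. Suppose q : [0,∞) → ℝ is differentiable with q(0) = q₀ and q'(t) = λ(t) − μ·min(q(t), c) − θ·max(q(t) − c, 0) for all t. Then q(t) > c for all t ≥ 0. -/
open Real

/-- If the Erlang-A fluid mean starts above `c` and the arrival rate uniformly exceeds
the capacity `cμ`, it stays above `c` forever. -/
theorem erlangA_fluid_mean_stays_above_c
    (theta mu c : ℝ) (htheta : 0 < theta) (hmu : 0 < mu) (hc : 0 < c)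
    (q₀ : ℝ) (hq₀ : c < q₀)
    (lam : ℝ → ℝ) (hlam_cont : Continuous lam)
    (hlam : c * mu < ⨅ t : {t : ℝ // 0 ≤ t}, lam t)
    (q : ℝ → ℝ) (hq0 : q 0 = q₀)
    (hq : ∀ t : ℝ, 0 ≤ t →
      HasDerivAt q (lam t - mu * min (q t) c - theta * max (q t - c) 0) t) :
    ∀ t : ℝ, 0 ≤ t → c < q t := by
  have hlam' : ∀ t : ℝ, 0 ≤ t → c * mu < lam t := by
    intro t ht
    by_cases hb : BddBelow (Set.range fun s : {t : ℝ // 0 ≤ t} => lam s)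
    · exact lt_of_lt_of_le hlam (ciInf_le hb ⟨t, ht⟩)
    · rw [Real.iInf_of_not_bddBelow hb] at hlam
      nlinarith [mul_pos hc hmu]
  by_contra h
  push_neg at h
  obtain ⟨t₁, ht₁, hqt₁⟩ := h
  set S : Set ℝ := {t | 0 ≤ t ∧ q t ≤ c} with hS
  have hne : S.Nonempty := ⟨t₁, ht₁, hqt₁⟩
  have hbdd : BddBelow S := ⟨0, fun x hx => hx.1⟩
  set T := sInf S with hT
  have hT0 : 0 ≤ T := le_csInf hne fun x hx => hx.1
  have hqcont : ∀ t : ℝ, 0 ≤ t → ContinuousAt q t := fun t ht => (hq t ht).continuousAt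
  -- q T ≤ c : T is in the closure of S and q is continuous at T
  have hqT_le : q T ≤ c := by
    have hcl : T ∈ closure S := csInf_mem_closure hne hbdd
    have hnb : (nhdsWithin T S).NeBot := mem_closure_iff_nhdsWithin_neBot.mp hcl
    have htend : Filter.Tendsto q (nhdsWithin T S) (nhds (q T)) :=
      ((hqcont T hT0).continuousWithinAt).tendsto
    have hev : ∀ᶠ x in nhdsWithin T S, q x ≤ c :=
      eventually_nhdsWithin_of_forall (fun x hx => hx.2)
    exact le_of_tendsto htend hev
  -- points strictly before T are not in S, hence q > c there
  have hbefore : ∀ t : ℝ, 0 ≤ t → t < T → c < q t := by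
    intro t ht htT
    by_contra hcon
    push_neg at hcon
    exact absurd htT (not_lt.mpr (csInf_le hbdd ⟨ht, hcon⟩))
  -- T > 0
  have hTpos : 0 < T := by
    rcases lt_or_eq_of_le hT0 with h | h
    · exact h
    · exfalso; rw [← h] at hqT_le; rw [hq0] at hqT_le; linarith
  -- q T ≥ c by left continuity
  have hqT_ge : c ≤ q T := by
    have htend : Filter.Tendsto q (nhdsWithin T (Set.Iio T)) (nhds (q T)) :=
      ((hqcont T hT0).continuousWithinAt).tendsto
    have hev : ∀ᶠ x in nhdsWithin T (Set.Iio T), c ≤ q x := by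
      have hmem : Set.Ioo 0 T ∈ nhdsWithin T (Set.Iio T) :=
        Ioo_mem_nhdsLT_of_mem ⟨hTpos, le_refl T⟩
      filter_upwards [hmem] with x hx
      exact (hbefore x hx.1.le hx.2).le
    exact ge_of_tendsto htend hev
  have hqT : q T = c := le_antisymm hqT_le hqT_ge
  -- the derivative at T is positive
  have hd := hq T hT0
  rw [hqT] at hd
  simp only [min_self, sub_self, max_self, mul_zero, sub_zero] at hd
  have hdpos : 0 < lam T - mu * c := by
    have := hlam' T hT0; nlinarith
  -- but the slope from the left is nonpositive
  have hslope : Filter.Tendsto (slope q T) (nhdsWithin T {T}ᶜ) (nhds (lam T - mu * c)) :=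
    hasDerivAt_iff_tendsto_slope.mp hd
  have hslope' : Filter.Tendsto (slope q T) (nhdsWithin T (Set.Iio T)) (nhds (lam T - mu * c)) :=
    hslope.mono_left (nhdsWithin_mono T (fun x hx => ne_of_lt hx))
  have hev : ∀ᶠ x in nhdsWithin T (Set.Iio T), slope q T x ≤ 0 := by
    have hmem : Set.Ioo 0 T ∈ nhdsWithin T (Set.Iio T) :=
      Ioo_mem_nhdsLT_of_mem ⟨hTpos, le_refl T⟩
    filter_upwards [hmem] with x hx
    have h1 : 0 ≤ q x - q T := by
      have := hbefore x hx.1.le hx.2; rw [hqT]; linarith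
    have h2 : x - T ≤ 0 := by linarith [hx.2]
    rw [slope_def_field]
    exact div_nonpos_of_nonneg_of_nonpos h1 h2
  have : lam T - mu * c ≤ 0 := le_of_tendsto hslope' hev
  linarith
end

section
/- Let θ, μ, c > 0 and λ(t) = λ₀ + Σ_{k=1}^{K}(a_k sin(kt) + b_k cos(kt)) with inf_t λ(t) > cμ, and let q₀ > c. Define G(t, α) = (e^α − 1)·(λ₀(1 − e^{−θt})/θ + Σ_{k=1}^{K} ((a_kθ + b_k k)sin(kt) + (b_kθ − a_k k)(cos(kt) − e^{−θt}))/(θ² + k²)) + (c(θ−μ)/θ)·α + (q₀ − c(θ−μ)/θ)·log((e^α − 1)e^{−θt} + 1). Then G satisfies ∂G/∂t = λ(t)(e^α − 1) + θ(e^{−α} − 1)·∂G/∂α − c(θ−μ)(e^{−α} − 1), with G(0, α) = α q₀. -/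
/-!
Write the candidate as `G = (e^α − 1) F(t) + A α + B log((e^α − 1) e^{−θt} + 1)`, where
`A = c(θ − μ)/θ`, `B = q₀ − A`, and `F` is the response of the linear fluid equation
`F' = λ(t) − θ F`, `F(0) = 0` (solved termwise for the constant and each Fourier mode of `λ`).
The logarithmic term solves the homogeneous transport equation `∂ₜ u = θ (e^{−α} − 1) ∂_α u`
exactly, the linear term `(e^α − 1) F` picks up `λ(t)(e^α − 1)` precisely because of the ODE for
`F`, and the term `A α` accounts for the constant `− θ A (e^{−α} − 1)`. At `t = 0` we have
`F = 0` and the logarithm equals `α`, so `G(0, α) = (A + B) α = q₀ α`.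
-/

open Real

noncomputable section

theorem hasDerivAt_exp_neg_mul (θ t : ℝ) :
    HasDerivAt (fun s => exp (-θ * s)) (-θ * exp (-θ * t)) t := by
  simpa [mul_comm] using ((hasDerivAt_id t).const_mul (-θ)).exp

section LinearResponse

variable {θ : ℝ}

theorem hasDerivAt_constResponse (hθ : θ ≠ 0) (c t : ℝ) :
    HasDerivAt (fun s => c * (1 - exp (-θ * s)) / θ)
      (c - θ * (c * (1 - exp (-θ * t)) / θ)) t := by
  refine ((((hasDerivAt_exp_neg_mul θ t).const_sub 1).const_mul c).div_const θ).congr_deriv ?_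
  field_simp
  ring

theorem hasDerivAt_harmonicResponse {ω : ℝ} (hω : θ ^ 2 + ω ^ 2 ≠ 0) (a b t : ℝ) :
    HasDerivAt
      (fun s => ((a * θ + b * ω) * sin (ω * s) + (b * θ - a * ω) * (cos (ω * s) - exp (-θ * s)))
        / (θ ^ 2 + ω ^ 2))
      ((a * sin (ω * t) + b * cos (ω * t)) - θ *
        (((a * θ + b * ω) * sin (ω * t) + (b * θ - a * ω) * (cos (ω * t) - exp (-θ * t)))
          / (θ ^ 2 + ω ^ 2))) t := by
  have hsin : HasDerivAt (fun s => sin (ω * s)) (cos (ω * t) * ω) t :=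
    ((hasDerivAt_id t).const_mul ω).sin.congr_deriv (by simp)
  have hcos : HasDerivAt (fun s => cos (ω * s)) (-sin (ω * t) * ω) t :=
    ((hasDerivAt_id t).const_mul ω).cos.congr_deriv (by simp)
  refine (((hsin.const_mul (a * θ + b * ω)).add
    ((hcos.sub (hasDerivAt_exp_neg_mul θ t)).const_mul (b * θ - a * ω))).div_const
      (θ ^ 2 + ω ^ 2)).congr_deriv ?_
  field_simp
  ring

end LinearResponse

def fourierRate (lam₀ : ℝ) (a b : ℕ → ℝ) (K : ℕ) (t : ℝ) : ℝ :=
  lam₀ + ∑ k ∈ Finset.Icc 1 K, (a k * sin (k * t) + b k * cos (k * t))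

/-- The solution of `F' = fourierRate lam₀ a b K − θ F` with `F 0 = 0`. -/
def fourierResponse (θ lam₀ : ℝ) (a b : ℕ → ℝ) (K : ℕ) (t : ℝ) : ℝ :=
  lam₀ * (1 - exp (-θ * t)) / θ +
    ∑ k ∈ Finset.Icc 1 K,
      ((a k * θ + b k * k) * sin (k * t) + (b k * θ - a k * k) * (cos (k * t) - exp (-θ * t)))
        / (θ ^ 2 + k ^ 2)

theorem hasDerivAt_fourierResponse {θ : ℝ} (hθ : θ ≠ 0) (lam₀ : ℝ) (a b : ℕ → ℝ) (K : ℕ)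
    (t : ℝ) :
    HasDerivAt (fourierResponse θ lam₀ a b K)
      (fourierRate lam₀ a b K t - θ * fourierResponse θ lam₀ a b K t) t := by
  have hmodes := HasDerivAt.fun_sum (u := Finset.Icc 1 K) fun k _ =>
    hasDerivAt_harmonicResponse (ω := (k : ℝ)) (by positivity) (a k) (b k) t
  refine ((hasDerivAt_constResponse hθ lam₀ t).add hmodes).congr_deriv ?_
  simp only [fourierRate, fourierResponse, Finset.sum_sub_distrib, ← Finset.mul_sum]
  ring

theorem fourierResponse_zero (θ lam₀ : ℝ) (a b : ℕ → ℝ) (K : ℕ) :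
    fourierResponse θ lam₀ a b K 0 = 0 := by
  simp [fourierResponse]

def fluidCGF (θ A B : ℝ) (F : ℝ → ℝ) (t α : ℝ) : ℝ :=
  (exp α - 1) * F t + A * α + B * log ((exp α - 1) * exp (-θ * t) + 1)

section FluidCGF

variable {θ A B : ℝ} {F : ℝ → ℝ} {t α : ℝ}

theorem hasDerivAt_fluidCGF_time {F' : ℝ} (hF : HasDerivAt F F' t)
    (hpos : 0 < (exp α - 1) * exp (-θ * t) + 1) :
    HasDerivAt (fun s => fluidCGF θ A B F s α)
      ((exp α - 1) * F' + B * ((exp α - 1) * (-θ * exp (-θ * t)))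
        / ((exp α - 1) * exp (-θ * t) + 1)) t := by
  have hlog := (((hasDerivAt_exp_neg_mul θ t).const_mul (exp α - 1)).add_const 1).log hpos.ne'
  refine (((hF.const_mul (exp α - 1)).add_const (A * α)).add (hlog.const_mul B)).congr_deriv ?_
  ring

theorem hasDerivAt_fluidCGF_space (hpos : 0 < (exp α - 1) * exp (-θ * t) + 1) :
    HasDerivAt (fun β => fluidCGF θ A B F t β)
      (exp α * F t + A + B * (exp α * exp (-θ * t)) / ((exp α - 1) * exp (-θ * t) + 1)) α := by
  have hlog := ((((hasDerivAt_exp α).sub_const 1).mul_const (exp (-θ * t))).add_const 1).log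
    hpos.ne'
  refine (((((hasDerivAt_exp α).sub_const 1).mul_const (F t)).add
    ((hasDerivAt_id α).const_mul A)).add (hlog.const_mul B)).congr_deriv ?_
  ring

theorem fluidCGF_pde {rate : ℝ} (hF : HasDerivAt F (rate - θ * F t) t)
    (hpos : 0 < (exp α - 1) * exp (-θ * t) + 1) :
    deriv (fun s => fluidCGF θ A B F s α) t
      = rate * (exp α - 1) + θ * (exp (-α) - 1) * deriv (fun β => fluidCGF θ A B F t β) α
        - θ * A * (exp (-α) - 1) := by
  rw [(hasDerivAt_fluidCGF_time hF hpos).deriv, (hasDerivAt_fluidCGF_space hpos).deriv, exp_neg]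
  have hexp : exp α ≠ 0 := exp_ne_zero α
  field_simp
  ring

theorem fluidCGF_zero_time (hF : F 0 = 0) (α : ℝ) :
    fluidCGF θ A B F 0 α = (A + B) * α := by
  simp [fluidCGF, hF, add_mul]

end FluidCGF

end

theorem erlangA_nonstationary_fluid_cgf_pde_general
    (theta mu c : ℝ) (htheta : 0 < theta)
    (K : ℕ) (lam₀ : ℝ) (a b : ℕ → ℝ) (lam : ℝ → ℝ)
    (hlam : ∀ t, lam t = lam₀ + ∑ k ∈ Finset.Icc 1 K, (a k * sin (k * t) + b k * cos (k * t)))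
    (q₀ : ℝ)
    (G : ℝ → ℝ → ℝ)
    (hG : ∀ t α, G t α =
      (exp α - 1) *
        (lam₀ * (1 - exp (-theta * t)) / theta +
          ∑ k ∈ Finset.Icc 1 K,
            ((a k * theta + b k * k) * sin (k * t)
              + (b k * theta - a k * k) * (cos (k * t) - exp (-theta * t)))
              / (theta ^ 2 + k ^ 2))
      + c * (theta - mu) / theta * α
      + (q₀ - c * (theta - mu) / theta) * Real.log ((exp α - 1) * exp (-theta * t) + 1)) :
    (∀ t α : ℝ, 0 < (exp α - 1) * exp (-theta * t) + 1 →
      deriv (fun s => G s α) t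
        = lam t * (exp α - 1) + theta * (exp (-α) - 1) * deriv (fun a' => G t a') α
          - c * (theta - mu) * (exp (-α) - 1)) ∧
    (∀ α : ℝ, G 0 α = α * q₀) := by
  set A := c * (theta - mu) / theta
  have hG : G = fluidCGF theta A (q₀ - A) (fourierResponse theta lam₀ a b K) :=
    funext₂ fun t α => hG t α
  have hrate : lam = fourierRate lam₀ a b K := funext hlam
  have hθA : c * (theta - mu) = theta * A := (mul_div_cancel₀ _ htheta.ne').symm
  subst hG hrate
  refine ⟨fun t α hpos => ?_, fun α => ?_⟩
  · rw [hθA]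
    exact fluidCGF_pde (hasDerivAt_fourierResponse htheta.ne' lam₀ a b K t) hpos
  · rw [fluidCGF_zero_time (fourierResponse_zero theta lam₀ a b K), add_sub_cancel, mul_comm]

/-- The fluid cumulant MGF of the uniformly overloaded nonstationary Erlang-A queue
satisfies `∂G/∂t = λ(t)(e^α − 1) + θ(e^{−α} − 1)∂G/∂α − c(θ−μ)(e^{−α} − 1)`
with `G(0, α) = α q₀`. -/
theorem erlangA_nonstationary_fluid_cgf_pde
    (theta mu c : ℝ) (htheta : 0 < theta) (hmu : 0 < mu) (hc : 0 < c)
    (K : ℕ) (lam₀ : ℝ) (a b : ℕ → ℝ) (lam : ℝ → ℝ)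
    (hlam : ∀ t, lam t = lam₀ + ∑ k ∈ Finset.Icc 1 K, (a k * sin (k * t) + b k * cos (k * t)))
    (hover : c * mu < ⨅ t : ℝ, lam t)
    (q₀ : ℝ) (hq₀ : c < q₀)
    (G : ℝ → ℝ → ℝ)
    (hG : ∀ t α, G t α =
      (exp α - 1) *
        (lam₀ * (1 - exp (-theta * t)) / theta +
          ∑ k ∈ Finset.Icc 1 K,
            ((a k * theta + b k * k) * sin (k * t)
              + (b k * theta - a k * k) * (cos (k * t) - exp (-theta * t)))
              / (theta ^ 2 + k ^ 2))
      + c * (theta - mu) / theta * α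
      + (q₀ - c * (theta - mu) / theta) * Real.log ((exp α - 1) * exp (-theta * t) + 1)) :
    (∀ t α : ℝ, 0 < (exp α - 1) * exp (-theta * t) + 1 →
      deriv (fun s => G s α) t
        = lam t * (exp α - 1) + theta * (exp (-α) - 1) * deriv (fun a' => G t a') α
          - c * (theta - mu) * (exp (-α) - 1)) ∧
    (∀ α : ℝ, G 0 α = α * q₀) :=
  erlangA_nonstationary_fluid_cgf_pde_general theta mu c htheta K lam₀ a b lam hlam q₀ G hG
end
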